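/- arXiv:1008.3034 — 5 statements merged into one kernel-verified Lean document; each statement's English description precedes it below -/
import Mathlib

section
/- Let (E_k, 𝓔_k), k = 0,…,n, be measurable spaces, let M_{k+1} and M̂_{k+1} be bounded positive integral kernels from E_k to E_{k+1} (with M̂_{k+1} acting on subsets Ê_k ⊂ E_k), and let f_k, f̂_k be bounded nonnegative measurable functions on E_k. Define u_k by the backward recursion u_n = f_n and u_k = f_k ∨ M_{k+1}(u_{k+1}), and û_k by û_n = f̂_n and û_k = f̂_k ∨ M̂_{k+1}(û_{k+1}). Then for any 0 ≤ k < n, at every point of Ê_k, |u_k − û_k| ≤ Σ_{l=k}^{n} M̂_{k,l}|f_l − f̂_l| + Σ_{l=k}^{n−1} M̂_{k,l}|(M_{l+1} − M̂_{l+1})u_{l+1}|, where M̂_{k,l} := M̂_{k+1}M̂_{k+2}⋯M̂_l denotes the composition of kernels, with M̂_{k,k} = Id. -/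
open MeasureTheory ProbabilityTheory

/-! Since `|max a b - max c d| ≤ |a - c| + |b - d|`, splitting `M u - M̂ û` through `M̂ u`
shows that the error `d_k = |u_k - û_k|` obeys the one-step inequality
`d_k ≤ |f_k - f̂_k| + |(M_{k+1} - M̂_{k+1}) u_{k+1}| + M̂_{k+1} d_{k+1}`.
Unrolling it backwards from `d_n = |f_n - f̂_n|` along the positive kernels `M̂` gives the bound;
boundedness and measurability of every function involved keep all integrals finite, which is
what the monotonicity and linearity of `M̂` need. -/

/-- The action of the composition of kernels `K_{k+1} K_{k+2} ⋯ K_{k+j}` (where `K m` is a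
kernel from `E m` to `E (m+1)`) on a bounded measurable function on `E (k+j)`, producing a
function on `E k`.  For `j = 0` this is the identity. -/
noncomputable def kernelComp {E : ℕ → Type*} [∀ k, MeasurableSpace (E k)]
    (K : ∀ k, Kernel (E k) (E (k + 1))) (k : ℕ) :
    ∀ j : ℕ, (E (k + j) → ℝ) → E k → ℝ
  | 0, φ => φ
  | j + 1, φ => kernelComp K k j (fun x => ∫ y, φ y ∂(K (k + j) x))

def BoundedMeasurable {α : Type*} [MeasurableSpace α] (φ : α → ℝ) : Prop :=
  Measurable φ ∧ ∃ C, ∀ x, ‖φ x‖ ≤ C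

namespace BoundedMeasurable

variable {α β : Type*} [MeasurableSpace α] [MeasurableSpace β] {φ ψ : α → ℝ}

theorem of_nonneg_of_exists_le (hm : Measurable φ) (h0 : ∀ x, 0 ≤ φ x)
    (hC : ∃ C, ∀ x, φ x ≤ C) : BoundedMeasurable φ := by
  obtain ⟨C, hC⟩ := hC
  exact ⟨hm, C, fun x => by rw [Real.norm_of_nonneg (h0 x)]; exact hC x⟩

theorem integrable (h : BoundedMeasurable φ) (μ : Measure α) [IsFiniteMeasure μ] :
    Integrable φ μ :=
  let ⟨hm, C, hC⟩ := h
  .of_bound hm.aestronglyMeasurable C (.of_forall hC)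

theorem max (h : BoundedMeasurable φ) (h' : BoundedMeasurable ψ) :
    BoundedMeasurable fun x => Max.max (φ x) (ψ x) := by
  obtain ⟨hm, C, hC⟩ := h
  obtain ⟨hm', C', hC'⟩ := h'
  refine ⟨hm.max hm', Max.max C C', fun x => ?_⟩
  simp only [Real.norm_eq_abs] at *
  exact (abs_max_le_max_abs_abs).trans (max_le_max (hC x) (hC' x))

theorem abs_sub (h : BoundedMeasurable φ) (h' : BoundedMeasurable ψ) :
    BoundedMeasurable fun x => |φ x - ψ x| := by
  obtain ⟨hm, C, hC⟩ := h
  obtain ⟨hm', C', hC'⟩ := h'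
  refine ⟨(hm.sub hm').abs, C + C', fun x => ?_⟩
  rw [Real.norm_eq_abs, abs_abs]
  exact (norm_sub_le _ _).trans (add_le_add (hC x) (hC' x))

theorem integral_kernel {φ : β → ℝ} (h : BoundedMeasurable φ) (K : Kernel α β)
    [IsFiniteKernel K] : BoundedMeasurable fun x => ∫ y, φ y ∂(K x) := by
  obtain ⟨hm, C, hC⟩ := h
  refine ⟨hm.stronglyMeasurable.integral_kernel.measurable, Max.max C 0 * K.bound.toReal,
    fun x => ?_⟩
  calc ‖∫ y, φ y ∂(K x)‖ ≤ Max.max C 0 * (K x).real Set.univ :=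
        norm_integral_le_of_norm_le_const (.of_forall fun y => (hC y).trans (le_max_left _ _))
    _ ≤ Max.max C 0 * K.bound.toReal := by
      gcongr
      exact ENNReal.toReal_mono K.bound_ne_top (K.measure_le_bound x _)

end BoundedMeasurable

section kernelComp

variable {E : ℕ → Type*} [∀ k, MeasurableSpace (E k)] (K : ∀ k, Kernel (E k) (E (k + 1)))

theorem BoundedMeasurable.kernelComp [∀ k, IsFiniteKernel (K k)] {k j : ℕ}
    {φ : E (k + j) → ℝ} (h : BoundedMeasurable φ) :
    BoundedMeasurable (kernelComp K k j φ) := by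
  induction j with
  | zero => exact h
  | succ j ih => exact ih (h.integral_kernel (K (k + j)))

theorem kernelComp_succ_eq_integral (g : ∀ m, E m → ℝ) (k j : ℕ) :
    kernelComp K k (j + 1) (g (k + (j + 1))) =
      fun x => ∫ y, kernelComp K (k + 1) j (g (k + 1 + j)) y ∂(K k x) := by
  induction j generalizing g with
  | zero => rfl
  | succ j ih => exact ih fun m x => ∫ y, g (m + 1) y ∂(K m x)

theorem sum_kernelComp_succ [∀ k, IsFiniteKernel (K k)] (a : ∀ m, E m → ℝ) {k m : ℕ}
    (ha : ∀ j < m, BoundedMeasurable (a (k + 1 + j))) (x : E k) :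
    ∑ j ∈ Finset.range (m + 1), kernelComp K k j (a (k + j)) x =
      a k x +
        ∫ y, ∑ j ∈ Finset.range m, kernelComp K (k + 1) j (a (k + 1 + j)) y ∂(K k x) := by
  rw [Finset.sum_range_succ', add_comm, integral_finsetSum _ fun j hj =>
    ((ha j (Finset.mem_range.1 hj)).kernelComp K).integrable _]
  congr 1
  exact Finset.sum_congr rfl fun j _ => congrFun (kernelComp_succ_eq_integral K a k j) x

theorem le_sum_kernelComp_of_le_add_integral [∀ k, IsFiniteKernel (K k)] {n : ℕ}
    {d a b : ∀ m, E m → ℝ} (hd : ∀ m ≤ n, BoundedMeasurable (d m))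
    (ha : ∀ m, BoundedMeasurable (a m)) (hb : ∀ m < n, BoundedMeasurable (b m))
    (h_term : ∀ x, d n x ≤ a n x)
    (h_step : ∀ k < n, ∀ x, d k x ≤ a k x + b k x + ∫ y, d (k + 1) y ∂(K k x)) :
    ∀ k ≤ n, ∀ x, d k x ≤
      (∑ j ∈ Finset.range (n - k + 1), kernelComp K k j (a (k + j)) x)
        + ∑ j ∈ Finset.range (n - k), kernelComp K k j (b (k + j)) x := by
  intro k hk
  induction hi : n - k generalizing k with
  | zero =>
    obtain rfl : k = n := by omega
    simpa [kernelComp] using h_term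
  | succ i ih =>
    intro x
    have ha' : ∀ j < i + 1, BoundedMeasurable (a (k + 1 + j)) := fun j _ => ha _
    have hb' : ∀ j < i, BoundedMeasurable (b (k + 1 + j)) := fun j _ => hb _ (by omega)
    have intA : Integrable (fun y => ∑ j ∈ Finset.range (i + 1),
        kernelComp K (k + 1) j (a (k + 1 + j)) y) (K k x) :=
      integrable_finsetSum _ fun j _ => ((ha _).kernelComp K).integrable _
    have intB : Integrable (fun y => ∑ j ∈ Finset.range i,
        kernelComp K (k + 1) j (b (k + 1 + j)) y) (K k x) :=
      integrable_finsetSum _ fun j hj =>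
        ((hb' j (Finset.mem_range.1 hj)).kernelComp K).integrable _
    have h_next : ∫ y, d (k + 1) y ∂(K k x) ≤
        (∫ y, ∑ j ∈ Finset.range (i + 1), kernelComp K (k + 1) j (a (k + 1 + j)) y ∂(K k x))
          + ∫ y, ∑ j ∈ Finset.range i,
              kernelComp K (k + 1) j (b (k + 1 + j)) y ∂(K k x) := by
      rw [← integral_add intA intB]
      exact integral_mono ((hd _ (by omega)).integrable _) (intA.add intB)
        (ih (k + 1) (by omega) (by omega))
    rw [sum_kernelComp_succ K a ha', sum_kernelComp_succ K b hb']
    linarith [h_step k (by omega) x]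

end kernelComp

theorem abs_max_integral_sub_max_integral_le {α : Type*} [MeasurableSpace α] {μ ν : Measure α}
    {u v : α → ℝ} (hu : Integrable u ν) (hv : Integrable v ν) (a b : ℝ) :
    |max a (∫ y, u y ∂μ) - max b (∫ y, v y ∂ν)| ≤
      |a - b| + |(∫ y, u y ∂μ) - ∫ y, u y ∂ν| + ∫ y, |u y - v y| ∂ν := by
  have h_int : |(∫ y, u y ∂ν) - ∫ y, v y ∂ν| ≤ ∫ y, |u y - v y| ∂ν := by
    rw [← integral_sub hu hv]
    exact abs_integral_le_integral_abs
  calc |max a (∫ y, u y ∂μ) - max b (∫ y, v y ∂ν)|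
      ≤ max |a - b| |(∫ y, u y ∂μ) - ∫ y, v y ∂ν| := abs_max_sub_max_le_max _ _ _ _
    _ ≤ |a - b| +
          (|(∫ y, u y ∂μ) - ∫ y, u y ∂ν| + |(∫ y, u y ∂ν) - ∫ y, v y ∂ν|) :=
      max_le_add_of_nonneg (abs_nonneg _) (abs_nonneg _) |>.trans
        (add_le_add_right (abs_sub_le _ _ _) _)
    _ ≤ _ := by linarith

section Snell

variable {E : ℕ → Type*} [∀ k, MeasurableSpace (E k)]

def IsSnellEnvelope (K : ∀ k, Kernel (E k) (E (k + 1))) (n : ℕ) (f u : ∀ k, E k → ℝ) :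
    Prop :=
  u n = f n ∧ ∀ k < n, ∀ x, u k x = max (f k x) (∫ y, u (k + 1) y ∂(K k x))

variable {K : ∀ k, Kernel (E k) (E (k + 1))} {n : ℕ} {f u : ∀ k, E k → ℝ}

theorem IsSnellEnvelope.boundedMeasurable [∀ k, IsFiniteKernel (K k)]
    (hu : IsSnellEnvelope K n f u) (hf : ∀ k, BoundedMeasurable (f k)) :
    ∀ k ≤ n, BoundedMeasurable (u k) := by
  intro k hk
  induction hi : n - k generalizing k with
  | zero =>
    obtain rfl : k = n := by omega
    exact hu.1 ▸ hf k
  | succ i ih =>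
    rw [show u k = _ from funext (hu.2 k (by omega))]
    exact (hf k).max ((ih (k + 1) (by omega) (by omega)).integral_kernel (K k))

theorem IsSnellEnvelope.abs_sub_le [∀ k, IsFiniteKernel (K k)]
    {Khat : ∀ k, Kernel (E k) (E (k + 1))} [∀ k, IsFiniteKernel (Khat k)]
    {fhat uhat : ∀ k, E k → ℝ} (hu : IsSnellEnvelope K n f u)
    (huhat : IsSnellEnvelope Khat n fhat uhat) (hf : ∀ k, BoundedMeasurable (f k))
    (hfhat : ∀ k, BoundedMeasurable (fhat k)) {k : ℕ} (hk : k < n) (x : E k) :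
    |u k x - uhat k x| ≤ |f k x - fhat k x|
      + |(∫ y, u (k + 1) y ∂(K k x)) - ∫ y, u (k + 1) y ∂(Khat k x)|
      + ∫ y, |u (k + 1) y - uhat (k + 1) y| ∂(Khat k x) := by
  rw [hu.2 k hk x, huhat.2 k hk x]
  exact abs_max_integral_sub_max_integral_le
    ((hu.boundedMeasurable hf (k + 1) hk).integrable _)
    ((huhat.boundedMeasurable hfhat (k + 1) hk).integrable _) _ _

end Snell

/-- Robustness lemma for Snell envelopes: if `u` and `û` are the Snell envelopes built
from the data `(f, M)` and `(f̂, M̂)` respectively, then on `Ê_k`, the difference `|u_k - û_k|`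
is controlled by the sums `Σ_{l=k}^{n} M̂_{k,l}|f_l - f̂_l| + Σ_{l=k}^{n-1} M̂_{k,l}|(M_{l+1} - M̂_{l+1}) u_{l+1}|`. -/
theorem snell_robustness
    (E : ℕ → Type*) [∀ k, MeasurableSpace (E k)] (n : ℕ)
    (Ehat : ∀ k, Set (E k))
    (M Mhat : ∀ k, Kernel (E k) (E (k + 1)))
    [∀ k, IsFiniteKernel (M k)] [∀ k, IsFiniteKernel (Mhat k)]
    (f fhat : ∀ k, E k → ℝ)
    (hf_meas : ∀ k, Measurable (f k)) (hfhat_meas : ∀ k, Measurable (fhat k))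
    (hf_nonneg : ∀ k x, 0 ≤ f k x) (hfhat_nonneg : ∀ k x, 0 ≤ fhat k x)
    (hf_bdd : ∀ k, ∃ C, ∀ x, f k x ≤ C) (hfhat_bdd : ∀ k, ∃ C, ∀ x, fhat k x ≤ C)
    (u uhat : ∀ k, E k → ℝ)
    (hu_term : u n = f n)
    (hu_rec : ∀ k, k < n → ∀ x, u k x = max (f k x) (∫ y, u (k + 1) y ∂(M k x)))
    (huhat_term : uhat n = fhat n)
    (huhat_rec : ∀ k, k < n →
      ∀ x, uhat k x = max (fhat k x) (∫ y, uhat (k + 1) y ∂(Mhat k x))) :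
    ∀ k, k < n → ∀ x ∈ Ehat k,
      |u k x - uhat k x| ≤
        (∑ j ∈ Finset.range (n - k + 1),
          kernelComp Mhat k j (fun y => |f (k + j) y - fhat (k + j) y|) x)
        + ∑ j ∈ Finset.range (n - k),
          kernelComp Mhat k j
            (fun y => |(∫ z, u (k + j + 1) z ∂(M (k + j) y))
              - ∫ z, u (k + j + 1) z ∂(Mhat (k + j) y)|) x := by
  have hf : ∀ k, BoundedMeasurable (f k) := fun k =>
    .of_nonneg_of_exists_le (hf_meas k) (hf_nonneg k) (hf_bdd k)
  have hfhat : ∀ k, BoundedMeasurable (fhat k) := fun k =>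
    .of_nonneg_of_exists_le (hfhat_meas k) (hfhat_nonneg k) (hfhat_bdd k)
  have hu : IsSnellEnvelope M n f u := ⟨hu_term, hu_rec⟩
  have huhat : IsSnellEnvelope Mhat n fhat uhat := ⟨huhat_term, huhat_rec⟩
  have hu_bdd := hu.boundedMeasurable hf
  intro k hk x _
  exact le_sum_kernelComp_of_le_add_integral Mhat
    (fun m hm => (hu_bdd m hm).abs_sub (huhat.boundedMeasurable hfhat m hm))
    (fun m => (hf m).abs_sub (hfhat m))
    (fun m hm => ((hu_bdd (m + 1) hm).integral_kernel (M m)).abs_sub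
      ((hu_bdd (m + 1) hm).integral_kernel (Mhat m)))
    (fun x => by simp only [hu_term, huhat_term, le_refl])
    (fun m hm x => hu.abs_sub_le huhat hf hfhat hm x) k hk.le x
end

section
/- Let (X_k)_{0≤k≤n} be a Markov chain with state spaces (E_k,𝓔_k) and Markov transition kernels M_k from E_{k−1} to E_k, let f_k and G_k be bounded nonnegative measurable functions on E_k, and set F_k(x_0,…,x_k) := f_k(x_k) ∏_{p=0}^{k−1} G_p(x_p). Let 𝓜_{k+1} be the historical-process transition 𝓜_{k+1}(χ_k, dχ'_{k+1}) = δ_{χ_k}(dχ'_k) M_{k+1}(x'_k, dx'_{k+1}) on path spaces. Define the path-dependent Snell envelope u_k by the backward recursion u_n = F_n and u_k(x_0,…,x_k) = F_k(x_0,…,x_k) ∨ 𝓜_{k+1}(u_{k+1})(x_0,…,x_k), and define v_k on E_k by v_n = f_n and v_k(x_k) = f_k(x_k) ∨ [G_k(x_k) · M_{k+1}(v_{k+1})(x_k)]. Then for all 0 ≤ k ≤ n and all (x_0,…,x_k), u_k(x_0,…,x_k) = v_k(x_k) ∏_{p=0}^{k−1} G_p(x_p); in particular u_0(x_0) = v_0(x_0).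 -/
open MeasureTheory ProbabilityTheory

/-! Downward induction on `k`. The weight `∏_{p<k} G_p(x_p)` of the path up to time `k` is
left unchanged by the historical transition, so it factors out of the gain `F_k` and out of the integral;
being nonnegative, it then factors out of the maximum as well. -/

lemma Fin.prod_univ_snoc_castSucc {E : ℕ → Type*} (G : ∀ k, E k → ℝ) {k : ℕ}
    (χ : ∀ i : Fin (k + 1), E i) (y : E (k + 1)) :
    ∏ p : Fin (k + 1), G p ((Fin.snoc χ y : ∀ i : Fin (k + 2), E i) p.castSucc)
      = G k (χ (Fin.last k)) * ∏ p : Fin k, G p (χ p.castSucc) := by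
  rw [Fin.prod_univ_castSucc]
  simp only [Fin.snoc_castSucc, Fin.val_castSucc, Fin.val_last]
  exact mul_comm _ _

lemma max_mul_integral_mul_const {α : Type*} [MeasurableSpace α] (μ : Measure α) (φ : α → ℝ)
    (a g : ℝ) {P : ℝ} (hP : 0 ≤ P) :
    max (a * P) (∫ y, φ y * (g * P) ∂μ) = max a (g * ∫ y, φ y ∂μ) * P := by
  rw [integral_mul_const, max_mul_of_nonneg _ _ hP]
  congr 1
  ring

theorem path_dependent_snell_factorization_general
    (E : ℕ → Type*) [∀ k, MeasurableSpace (E k)] (n : ℕ)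
    (M : ∀ k, Kernel (E k) (E (k + 1)))
    (f G : ∀ k, E k → ℝ)
    (hG_nonneg : ∀ k x, 0 ≤ G k x)
    -- the path-dependent gain functions `F_k`
    (F : ∀ k, (∀ i : Fin (k + 1), E i) → ℝ)
    (hF : ∀ k, ∀ χ : ∀ i : Fin (k + 1), E i,
      F k χ = f k (χ (Fin.last k)) * ∏ p : Fin k, G p (χ p.castSucc))
    -- the path-dependent Snell envelope `u`
    (u : ∀ k, (∀ i : Fin (k + 1), E i) → ℝ)
    (hu_term : ∀ χ : ∀ i : Fin (n + 1), E i, u n χ = F n χ)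
    (hu_rec : ∀ k, k < n → ∀ χ : ∀ i : Fin (k + 1), E i,
      u k χ = max (F k χ)
        (∫ y, u (k + 1) (Fin.snoc χ y) ∂(M k (χ (Fin.last k)))))
    -- the standard Snell envelope `v`
    (v : ∀ k, E k → ℝ)
    (hv_term : v n = f n)
    (hv_rec : ∀ k, k < n → ∀ x,
      v k x = max (f k x) (G k x * ∫ y, v (k + 1) y ∂(M k x))) :
    (∀ k, k ≤ n → ∀ χ : ∀ i : Fin (k + 1), E i,
      u k χ = v k (χ (Fin.last k)) * ∏ p : Fin k, G p (χ p.castSucc)) ∧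
    (∀ χ : ∀ i : Fin 1, E i, u 0 χ = v 0 (χ (Fin.last 0))) := by
  have factor : ∀ k, k ≤ n → ∀ χ : ∀ i : Fin (k + 1), E i,
      u k χ = v k (χ (Fin.last k)) * ∏ p : Fin k, G p (χ p.castSucc) := by
    intro k hk
    induction hk using Nat.decreasingInduction with
    | self => intro χ; rw [hu_term, hF, hv_term]
    | of_succ k hkn ih =>
      intro χ
      have hnext : ∀ y : E (k + 1), u (k + 1) (Fin.snoc χ y)
          = v (k + 1) y * (G k (χ (Fin.last k)) * ∏ p : Fin k, G p (χ p.castSucc)) := by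
        intro y
        rw [ih, Fin.snoc_last, Fin.prod_univ_snoc_castSucc]
      have hP : 0 ≤ ∏ p : Fin k, G p (χ p.castSucc) :=
        Finset.prod_nonneg fun p _ => hG_nonneg _ _
      rw [hu_rec k hkn, hF, hv_rec k hkn, funext hnext, max_mul_integral_mul_const _ _ _ _ hP]
  exact ⟨factor, fun χ => by simpa using factor 0 n.zero_le χ⟩

/-- The multiplicatively path-dependent Snell envelope `u_k` on path space, associated to the
gain functions `F_k(x_0,…,x_k) = f_k(x_k) ∏_{p<k} G_p(x_p)` and the historical-process
transitions `𝓜_{k+1}(χ_k, dχ'_{k+1}) = δ_{χ_k}(dχ'_k) M_{k+1}(x'_k, dx'_{k+1})`, factorizes as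
`u_k(x_0,…,x_k) = v_k(x_k) ∏_{p<k} G_p(x_p)` where `v` is the standard Snell envelope of the
recursion `v_k = f_k ∨ (G_k · M_{k+1}(v_{k+1}))`; in particular `u_0 = v_0`. -/
theorem path_dependent_snell_factorization
    (E : ℕ → Type*) [∀ k, MeasurableSpace (E k)] (n : ℕ)
    (M : ∀ k, Kernel (E k) (E (k + 1))) [∀ k, IsMarkovKernel (M k)]
    (f G : ∀ k, E k → ℝ)
    (hf_meas : ∀ k, Measurable (f k)) (hG_meas : ∀ k, Measurable (G k))
    (hf_nonneg : ∀ k x, 0 ≤ f k x) (hG_nonneg : ∀ k x, 0 ≤ G k x)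
    (hf_bdd : ∀ k, ∃ C, ∀ x, f k x ≤ C) (hG_bdd : ∀ k, ∃ C, ∀ x, G k x ≤ C)
    -- the path-dependent gain functions `F_k`
    (F : ∀ k, (∀ i : Fin (k + 1), E i) → ℝ)
    (hF : ∀ k, ∀ χ : ∀ i : Fin (k + 1), E i,
      F k χ = f k (χ (Fin.last k)) * ∏ p : Fin k, G p (χ p.castSucc))
    -- the path-dependent Snell envelope `u`
    (u : ∀ k, (∀ i : Fin (k + 1), E i) → ℝ)
    (hu_term : ∀ χ : ∀ i : Fin (n + 1), E i, u n χ = F n χ)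
    (hu_rec : ∀ k, k < n → ∀ χ : ∀ i : Fin (k + 1), E i,
      u k χ = max (F k χ)
        (∫ y, u (k + 1) (Fin.snoc χ y) ∂(M k (χ (Fin.last k)))))
    -- the standard Snell envelope `v`
    (v : ∀ k, E k → ℝ)
    (hv_term : v n = f n)
    (hv_rec : ∀ k, k < n → ∀ x,
      v k x = max (f k x) (G k x * ∫ y, v (k + 1) y ∂(M k x))) :
    (∀ k, k ≤ n → ∀ χ : ∀ i : Fin (k + 1), E i,
      u k χ = v k (χ (Fin.last k)) * ∏ p : Fin k, G p (χ p.castSucc)) ∧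
    (∀ χ : ∀ i : Fin 1, E i, u 0 χ = v 0 (χ (Fin.last 0))) :=
  path_dependent_snell_factorization_general E n M f G hG_nonneg F hF u hu_term hu_rec v hv_term
    hv_rec
end

section
/- Let M_{k+1} be a Markov kernel from E_k to E_{k+1} of the form M_{k+1}(x_k, dx_{k+1}) = H_{k+1}(x_k, x_{k+1}) λ_{k+1}(dx_{k+1}) for a strictly positive measurable function H_{k+1} and a measure λ_{k+1} on E_{k+1}, and let G_k be a bounded nonnegative measurable function on E_k. For a probability measure η on E_k with η(G_k) > 0, define Φ_{k+1}(η)(f) := η(G_k · M_{k+1}(f)) / η(G_k). Then for every x_k ∈ E_k, the measure M_{k+1}(x_k, ·) is absolutely continuous with respect to Φ_{k+1}(η), with density (dM_{k+1}(x_k,·)/dΦ_{k+1}(η))(x_{k+1}) = H_{k+1}(x_k, x_{k+1}) · η(G_k) / η(G_k H_{k+1}(·, x_{k+1})); equivalently, for every bounded measurable f on E_{k+1}, ∫ M_{k+1}(x_k, dx_{k+1}) f(x_{k+1}) = ∫ Φ_{k+1}(η)(dx_{k+1}) H_{k+1}(x_k, x_{k+1}) (η(G_k)/η(G_k H_{k+1}(·,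 x_{k+1}))) f(x_{k+1}). -/
open MeasureTheory
open scoped ENNReal NNReal

/-! By Tonelli, `η(G · M(1_s)) = ∫_s η(G H(·,y)) λ(dy)`, so `η(G) · Φ(η)` is the measure with
density `y ↦ η(G H(·,y))` with respect to `λ`. This density is positive, so integrating
`H(x,·) f / η(G H(·,·))` against `η(G) · Φ(η)` gives back `∫ M(x,dy) f(y)`. -/

section UpdatedMeasure

variable {E E' : Type*} [MeasurableSpace E] [MeasurableSpace E'] {lam : Measure E'}
  {η : Measure E} {H : E → E' → ℝ} {G : E → ℝ}

theorem measurable_integral_mul_left [SFinite η] (hH_meas : Measurable (Function.uncurry H))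
    (hG_meas : Measurable G) : Measurable fun y => ∫ x, G x * H x y ∂η :=
  (((hG_meas.comp measurable_fst).mul hH_meas).stronglyMeasurable.integral_prod_left
    (f := fun x y => G x * H x y)).measurable

theorem lintegral_ofReal_mul_lintegral_eq [SFinite η] [SFinite lam]
    (hH_meas : Measurable (Function.uncurry H)) (hH_nonneg : ∀ x y, 0 ≤ H x y)
    (hG_meas : Measurable G) (hG_nonneg : ∀ x, 0 ≤ G x)
    (hGH_int : ∀ y, Integrable (fun x => G x * H x y) η) :
    ∫⁻ x, ENNReal.ofReal (G x) * ∫⁻ y, ENNReal.ofReal (H x y) ∂lam ∂η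
      = ∫⁻ y, ENNReal.ofReal (∫ x, G x * H x y ∂η) ∂lam := by
  have hGH_meas : Measurable fun p : E × E' => ENNReal.ofReal (G p.1) * ENNReal.ofReal (H p.1 p.2) :=
    (hG_meas.comp measurable_fst).ennreal_ofReal.mul hH_meas.ennreal_ofReal
  calc _ = ∫⁻ x, ∫⁻ y, ENNReal.ofReal (G x) * ENNReal.ofReal (H x y) ∂lam ∂η :=
        lintegral_congr fun x =>
          (lintegral_const_mul _ (hH_meas.comp measurable_prodMk_left).ennreal_ofReal).symm
    _ = ∫⁻ y, ∫⁻ x, ENNReal.ofReal (G x) * ENNReal.ofReal (H x y) ∂η ∂lam :=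
        lintegral_lintegral_swap hGH_meas.aemeasurable
    _ = _ := lintegral_congr fun y => by
        rw [ofReal_integral_eq_lintegral_ofReal (hGH_int y)
          (.of_forall fun x => mul_nonneg (hG_nonneg x) (hH_nonneg x y))]
        exact lintegral_congr fun x => (ENNReal.ofReal_mul (hG_nonneg x)).symm

theorem ofReal_integral_mul_integral_eq [SFinite η] [SFinite lam]
    (hH_meas : Measurable (Function.uncurry H)) (hH_nonneg : ∀ x y, 0 ≤ H x y)
    (hH_le_one : ∀ x, ∫⁻ y, ENNReal.ofReal (H x y) ∂lam ≤ 1)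
    (hG_meas : Measurable G) (hG_nonneg : ∀ x, 0 ≤ G x) (hG_int : Integrable G η)
    (hGH_int : ∀ y, Integrable (fun x => G x * H x y) η) :
    ENNReal.ofReal (∫ x, G x * ∫ y, H x y ∂lam ∂η)
      = ∫⁻ y, ENNReal.ofReal (∫ x, G x * H x y ∂η) ∂lam := by
  have hM_eq : ∀ x, ENNReal.ofReal (∫ y, H x y ∂lam) = ∫⁻ y, ENNReal.ofReal (H x y) ∂lam := fun x => by
    rw [integral_eq_lintegral_of_nonneg_ae (.of_forall (hH_nonneg x))
      (hH_meas.comp measurable_prodMk_left).aestronglyMeasurable,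
      ENNReal.ofReal_toReal ((hH_le_one x).trans_lt ENNReal.one_lt_top).ne]
  have hM_nonneg : ∀ x, 0 ≤ ∫ y, H x y ∂lam := fun x => integral_nonneg (hH_nonneg x)
  have hM_le_one : ∀ x, ∫ y, H x y ∂lam ≤ 1 := fun x => by
    rw [← ENNReal.ofReal_le_one, hM_eq]
    exact hH_le_one x
  have hGM_int : Integrable (fun x => G x * ∫ y, H x y ∂lam) η := by
    refine hG_int.mono' (hG_meas.mul ?_).aestronglyMeasurable (.of_forall fun x => ?_)
    · exact (hH_meas.stronglyMeasurable.integral_prod_right' (ν := lam)).measurable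
    · rw [Real.norm_of_nonneg (mul_nonneg (hG_nonneg x) (hM_nonneg x))]
      exact mul_le_of_le_one_right (hG_nonneg x) (hM_le_one x)
  rw [ofReal_integral_eq_lintegral_ofReal hGM_int
    (.of_forall fun x => mul_nonneg (hG_nonneg x) (hM_nonneg x)),
    ← lintegral_ofReal_mul_lintegral_eq hH_meas hH_nonneg hG_meas hG_nonneg hGH_int]
  exact lintegral_congr fun x => by rw [ENNReal.ofReal_mul (hG_nonneg x), hM_eq]

theorem ofReal_smul_eq_withDensity [SFinite η] [SFinite lam] {ν : Measure E'}
    [IsFiniteMeasure ν] (hH_meas : Measurable (Function.uncurry H))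
    (hH_nonneg : ∀ x y, 0 ≤ H x y) (hMarkov : ∀ x, ∫ y, H x y ∂lam = 1)
    (hG_meas : Measurable G) (hG_nonneg : ∀ x, 0 ≤ G x) (hηG_pos : 0 < ∫ x, G x ∂η)
    (hGH_int : ∀ y, Integrable (fun x => G x * H x y) η)
    (hν : ∀ s, MeasurableSet s →
      ν.real s = (∫ x, G x * ∫ y in s, H x y ∂lam ∂η) / ∫ x, G x ∂η) :
    ENNReal.ofReal (∫ x, G x ∂η) • ν
      = lam.withDensity fun y => ENNReal.ofReal (∫ x, G x * H x y ∂η) := by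
  have hH_le_one : ∀ x, ∫⁻ y, ENNReal.ofReal (H x y) ∂lam ≤ 1 := fun x => by
    rw [← ofReal_integral_eq_lintegral_ofReal
      (Integrable.of_integral_ne_zero (by simp [hMarkov x])) (.of_forall (hH_nonneg x)),
      hMarkov x, ENNReal.ofReal_one]
  ext s hs
  rw [Measure.smul_apply, smul_eq_mul, withDensity_apply _ hs, ← ofReal_measureReal, hν s hs,
    ← ENNReal.ofReal_mul hηG_pos.le, mul_div_cancel₀ _ hηG_pos.ne']
  exact ofReal_integral_mul_integral_eq hH_meas hH_nonneg
    (fun x => (setLIntegral_le_lintegral s _).trans (hH_le_one x)) hG_meas hG_nonneg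
    (Integrable.of_integral_ne_zero hηG_pos.ne') hGH_int

end UpdatedMeasure

theorem integral_eq_integral_mul_div_of_smul_eq_withDensity {α : Type*} [MeasurableSpace α]
    {μ ν : Measure α} {c : ℝ} (hc : 0 ≤ c) {ρ : α → ℝ} (hρ_meas : Measurable ρ)
    (hρ_pos : ∀ a, 0 < ρ a) (h : ENNReal.ofReal c • ν = μ.withDensity fun a => ENNReal.ofReal (ρ a))
    (F : α → ℝ) : ∫ a, F a ∂μ = ∫ a, c / ρ a * F a ∂ν := by
  have key := congrArg (fun m => ∫ a, F a / ρ a ∂m) h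
  simp only [integral_smul_measure, ENNReal.toReal_ofReal hc, smul_eq_mul] at key
  rw [show (fun a => ENNReal.ofReal (ρ a)) = fun a => ((ρ a).toNNReal : ℝ≥0∞) from rfl,
    integral_withDensity_eq_integral_smul hρ_meas.real_toNNReal] at key
  calc ∫ a, F a ∂μ = ∫ a, (ρ a).toNNReal • (F a / ρ a) ∂μ := by
        refine integral_congr_ae (.of_forall fun a => ?_)
        simp [NNReal.smul_def, Real.coe_toNNReal _ (hρ_pos a).le, mul_div_cancel₀ _ (hρ_pos a).ne']
    _ = c * ∫ a, F a / ρ a ∂ν := key.symm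
    _ = ∫ a, c / ρ a * F a ∂ν := by
        rw [← integral_const_mul]
        exact integral_congr_ae (.of_forall fun a => by ring)

theorem kernel_radon_nikodym_wrt_updated_measure_general
    (E E' : Type*) [MeasurableSpace E] [MeasurableSpace E']
    (lam : Measure E') [SigmaFinite lam]
    (H : E → E' → ℝ) (hH_meas : Measurable (Function.uncurry H))
    (hH_pos : ∀ x y, 0 < H x y)
    -- `M(x,dy) = H(x,y) λ(dy)` is a Markov kernel
    (hMarkov : ∀ x, ∫ y, H x y ∂lam = 1)
    (G : E → ℝ) (hG_meas : Measurable G) (hG_nonneg : ∀ x, 0 ≤ G x)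
    (η : Measure E) [IsProbabilityMeasure η]
    (hηG_pos : 0 < ∫ x, G x ∂η)
    -- `η(G H(·,y))` is finite and positive for every `y`
    (hGH_int : ∀ y, Integrable (fun x => G x * H x y) η)
    (hGH_pos : ∀ y, 0 < ∫ x, G x * H x y ∂η)
    -- `ν` is the updated measure `Φ(η)`: `ν(f) = η(G·M(f))/η(G)` for bounded measurable `f`
    (ν : Measure E') [IsProbabilityMeasure ν]
    (hν : ∀ f : E' → ℝ, Measurable f → (∃ C, ∀ y, |f y| ≤ C) →
      ∫ y, f y ∂ν = (∫ x, G x * ∫ y, H x y * f y ∂lam ∂η) / ∫ x, G x ∂η) :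
    ∀ x : E, ∀ f : E' → ℝ, Measurable f → (∃ C, ∀ y, |f y| ≤ C) →
      ∫ y, H x y * f y ∂lam
        = ∫ y, H x y * ((∫ z, G z ∂η) / (∫ z, G z * H z y ∂η)) * f y ∂ν := by
  have hν_set : ∀ s, MeasurableSet s →
      ν.real s = (∫ x, G x * ∫ y in s, H x y ∂lam ∂η) / ∫ x, G x ∂η := fun s hs => by
    have hind : ∀ x, (fun y => H x y * s.indicator 1 y) = s.indicator (H x) := fun x => by
      ext y; by_cases hy : y ∈ s <;> simp [hy]
    rw [← integral_indicator_one hs, hν (s.indicator 1) (measurable_const.indicator hs)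
      ⟨1, fun y => by by_cases hy : y ∈ s <;> simp [hy]⟩]
    simp_rw [hind, integral_indicator hs]
  have hdensity := ofReal_smul_eq_withDensity hH_meas (fun x y => (hH_pos x y).le) hMarkov
    hG_meas hG_nonneg hηG_pos hGH_int hν_set
  intro x f _ _
  rw [integral_eq_integral_mul_div_of_smul_eq_withDensity hηG_pos.le
    (measurable_integral_mul_left hH_meas hG_meas) hGH_pos hdensity]
  exact integral_congr_ae (.of_forall fun y => by ring)

/-- For a Markov kernel `M(x,dy) = H(x,y) λ(dy)` with strictly positive density `H`, a bounded
nonnegative potential `G` and a probability measure `η` with `η(G) > 0`, the kernel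
`M(x,·)` is absolutely continuous w.r.t. the updated measure `Φ(η)` defined by
`Φ(η)(f) = η(G · M(f)) / η(G)`, with density
`(dM(x,·)/dΦ(η))(y) = H(x,y) η(G) / η(G H(·,y))`: for every bounded measurable `f`,
`∫ M(x,dy) f(y) = ∫ Φ(η)(dy) H(x,y) (η(G)/η(G H(·,y))) f(y)`. -/
theorem kernel_radon_nikodym_wrt_updated_measure
    (E E' : Type*) [MeasurableSpace E] [MeasurableSpace E']
    (lam : Measure E') [SigmaFinite lam]
    (H : E → E' → ℝ) (hH_meas : Measurable (Function.uncurry H))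
    (hH_pos : ∀ x y, 0 < H x y)
    -- `M(x,dy) = H(x,y) λ(dy)` is a Markov kernel
    (hMarkov : ∀ x, ∫ y, H x y ∂lam = 1)
    (G : E → ℝ) (hG_meas : Measurable G) (hG_nonneg : ∀ x, 0 ≤ G x)
    (hG_bdd : ∃ C, ∀ x, G x ≤ C)
    (η : Measure E) [IsProbabilityMeasure η]
    (hηG_pos : 0 < ∫ x, G x ∂η)
    -- `η(G H(·,y))` is finite and positive for every `y`
    (hGH_int : ∀ y, Integrable (fun x => G x * H x y) η)
    (hGH_pos : ∀ y, 0 < ∫ x, G x * H x y ∂η)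
    -- `ν` is the updated measure `Φ(η)`: `ν(f) = η(G·M(f))/η(G)` for bounded measurable `f`
    (ν : Measure E') [IsProbabilityMeasure ν]
    (hν : ∀ f : E' → ℝ, Measurable f → (∃ C, ∀ y, |f y| ≤ C) →
      ∫ y, f y ∂ν = (∫ x, G x * ∫ y, H x y * f y ∂lam ∂η) / ∫ x, G x ∂η) :
    ∀ x : E, ∀ f : E' → ℝ, Measurable f → (∃ C, ∀ y, |f y| ≤ C) →
      ∫ y, H x y * f y ∂lam
        = ∫ y, H x y * ((∫ z, G z ∂η) / (∫ z, G z * H z y ∂η)) * f y ∂ν :=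
  kernel_radon_nikodym_wrt_updated_measure_general E E' lam H hH_meas hH_pos hMarkov G hG_meas
    hG_nonneg η hηG_pos hGH_int hGH_pos ν hν
end

section
/- Let U be a nonnegative random variable and b < ∞ a constant such that E(U^r)^{1/r} ≤ a(r) · b for all integers r ≥ 1, where a(2m)^{2m} = (2m)_m 2^{−m} and a(2m+1)^{2m+1} = ((2m+1)_{m+1}/√(m+1/2)) 2^{−(m+1/2)}. Then for every t ≥ 0, E(e^{tU}) ≤ exp((bt)²/2 + bt). -/
open MeasureTheory ProbabilityTheory

/-- The Khintchine-type constants `a(p)`, defined by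
`a(2m)^{2m} = (2m)_m 2^{-m}` and `a(2m+1)^{2m+1} = ((2m+1)_{m+1}/√(m+1/2)) 2^{-(m+1/2)}`. -/
noncomputable def aConst (p : ℕ) : ℝ :=
  if Even p then
    ((p.descFactorial (p / 2) : ℝ) * (2 : ℝ) ^ (-(p : ℝ) / 2)) ^ ((p : ℝ)⁻¹)
  else
    ((p.descFactorial ((p + 1) / 2) : ℝ) / Real.sqrt ((p : ℝ) / 2)
        * (2 : ℝ) ^ (-(p : ℝ) / 2)) ^ ((p : ℝ)⁻¹)

/-! Expand `E e^{tU} = ∑ tⁿ E(Uⁿ)/n!` and put `x = bt`. Since `(2m)! = m! (2m)_m`, the moment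
bound makes the term of index `2m` at most `(x²/2)^m/m!`; since `(2m+1)! = m! (2m+1)_{m+1}` and
`√(m+1/2)·√2 = √(2m+1) ≥ 1`, the term of index `2m+1` is at most `x (x²/2)^m/m!`. Summing,
`E e^{tU} ≤ (1 + x) e^{x²/2} ≤ e^{x²/2 + x}`. -/

open Nat

lemma aConst_one : aConst 1 = 1 := by
  rw [aConst, if_neg (by decide)]
  norm_num [Real.sqrt_eq_rpow, Real.rpow_neg]
  rw [Real.div_rpow zero_le_one zero_le_two, Real.one_rpow, one_div, inv_inv,
    mul_inv_cancel₀ (by positivity)]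

lemma aConst_two_mul_pow (m : ℕ) :
    aConst (2 * m) ^ (2 * m) = ((2 * m).descFactorial m : ℝ) / 2 ^ m := by
  rcases eq_or_ne m 0 with rfl | hm
  · simp
  rw [aConst, if_pos (even_two_mul m), Nat.mul_div_cancel_left m two_pos,
    Real.rpow_inv_natCast_pow (by positivity) (by omega),
    show -((2 * m : ℕ) : ℝ) / 2 = -(m : ℝ) by push_cast; ring,
    Real.rpow_neg zero_le_two, Real.rpow_natCast, div_eq_mul_inv]

lemma aConst_two_mul_add_one_pow_le (m : ℕ) :
    aConst (2 * m + 1) ^ (2 * m + 1) ≤ ((2 * m + 1).descFactorial (m + 1) : ℝ) / 2 ^ m := by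
  have hpow : (2 : ℝ) ^ (-((2 * m + 1 : ℕ) : ℝ) / 2) = (2 ^ m)⁻¹ / √2 := by
    rw [show -((2 * m + 1 : ℕ) : ℝ) / 2 = -(m : ℝ) + -(1 / 2) by push_cast; ring,
      Real.rpow_add two_pos, Real.rpow_neg zero_le_two, Real.rpow_neg zero_le_two,
      Real.rpow_natCast, ← Real.sqrt_eq_rpow, div_eq_mul_inv]
  have hsqrt : √(((2 * m + 1 : ℕ) : ℝ) / 2) * √2 = √((2 * m + 1 : ℕ) : ℝ) := by
    rw [← Real.sqrt_mul (by positivity), div_mul_cancel₀ _ two_ne_zero]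
  rw [aConst, if_neg (Nat.not_even_two_mul_add_one m), show (2 * m + 1 + 1) / 2 = m + 1 by omega,
    Real.rpow_inv_natCast_pow (by positivity) (by omega), hpow]
  calc _ = ((2 * m + 1).descFactorial (m + 1) : ℝ) / 2 ^ m / √((2 * m + 1 : ℕ) : ℝ) := by
        rw [← hsqrt]; ring
    _ ≤ _ := div_le_self (by positivity) (Real.one_le_sqrt.mpr (by norm_cast; omega))

lemma Real.hasSum_pow_div_factorial (y : ℝ) : HasSum (fun n ↦ y ^ n / n !) (Real.exp y) := by
  rw [Real.exp_eq_exp_ℝ]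
  exact NormedSpace.expSeries_div_hasSum_exp y

lemma Real.exp_add_mul_exp_le_exp_add (a x : ℝ) : Real.exp a + x * Real.exp a ≤ Real.exp (a + x) :=
  calc Real.exp a + x * Real.exp a = Real.exp a * (x + 1) := by ring
    _ ≤ Real.exp a * Real.exp x := by gcongr; exact Real.add_one_le_exp x
    _ = Real.exp (a + x) := (Real.exp_add a x).symm

section EvenOdd

variable {f g h : ℕ → ℝ}

lemma summable_of_nonneg_of_even_odd_le (hf : ∀ n, 0 ≤ f n) (hg : Summable g) (hh : Summable h)
    (hfg : ∀ m, f (2 * m) ≤ g m) (hfh : ∀ m, f (2 * m + 1) ≤ h m) : Summable f :=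
  .even_add_odd (hg.of_nonneg_of_le (fun _ ↦ hf _) hfg) (hh.of_nonneg_of_le (fun _ ↦ hf _) hfh)

lemma tsum_le_of_even_odd_le (hf : ∀ n, 0 ≤ f n) (hg : Summable g) (hh : Summable h)
    (hfg : ∀ m, f (2 * m) ≤ g m) (hfh : ∀ m, f (2 * m + 1) ≤ h m) :
    ∑' n, f n ≤ ∑' m, g m + ∑' m, h m := by
  have he := hg.of_nonneg_of_le (fun _ ↦ hf _) hfg
  have ho := hh.of_nonneg_of_le (fun _ ↦ hf _) hfh
  rw [← tsum_even_add_odd he ho]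
  exact add_le_add (he.tsum_le_tsum hfg hg) (ho.tsum_le_tsum hfh hh)

end EvenOdd

lemma Nat.cast_descFactorial_div_factorial {n k : ℕ} (h : k ≤ n) :
    (n.descFactorial k : ℝ) / n ! = ((n - k)! : ℝ)⁻¹ := by
  rw [← factorial_mul_descFactorial h]
  push_cast
  have : (n.descFactorial k : ℝ) ≠ 0 := by
    norm_cast; exact (Nat.descFactorial_pos.mpr h).ne'
  field_simp

lemma pow_two_mul_div_factorial_mul_descFactorial (y : ℝ) (m : ℕ) :
    y ^ (2 * m) / (2 * m)! * ((2 * m).descFactorial m / 2 ^ m) = (y ^ 2 / 2) ^ m / m ! := by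
  have h := Nat.cast_descFactorial_div_factorial (show m ≤ 2 * m by omega)
  rw [show 2 * m - m = m by omega] at h
  calc _ = (y ^ 2) ^ m / 2 ^ m * ((2 * m).descFactorial m / (2 * m)!) := by ring
    _ = _ := by rw [h, div_pow]; ring

lemma pow_two_mul_add_one_div_factorial_mul_descFactorial (y : ℝ) (m : ℕ) :
    y ^ (2 * m + 1) / (2 * m + 1)! * ((2 * m + 1).descFactorial (m + 1) / 2 ^ m) =
      y * ((y ^ 2 / 2) ^ m / m !) := by
  have h := Nat.cast_descFactorial_div_factorial (show m + 1 ≤ 2 * m + 1 by omega)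
  rw [show 2 * m + 1 - (m + 1) = m by omega] at h
  calc _ = y * ((y ^ 2) ^ m / 2 ^ m) * ((2 * m + 1).descFactorial (m + 1) / (2 * m + 1)!) := by
        ring
    _ = _ := by rw [h, div_pow]; ring

lemma pow_two_mul_div_factorial_mul_le {t b I : ℝ} (ht : 0 ≤ t) (m : ℕ)
    (hI : I ≤ (aConst (2 * m) * b) ^ (2 * m)) :
    t ^ (2 * m) / (2 * m)! * I ≤ ((b * t) ^ 2 / 2) ^ m / m ! :=
  calc t ^ (2 * m) / (2 * m)! * I
      ≤ t ^ (2 * m) / (2 * m)! * ((2 * m).descFactorial m / 2 ^ m * b ^ (2 * m)) := by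
        refine mul_le_mul_of_nonneg_left ?_ (by positivity)
        rwa [← aConst_two_mul_pow, ← mul_pow]
    _ = (b * t) ^ (2 * m) / (2 * m)! * ((2 * m).descFactorial m / 2 ^ m) := by ring
    _ = _ := pow_two_mul_div_factorial_mul_descFactorial _ _

lemma pow_two_mul_add_one_div_factorial_mul_le {t b I : ℝ} (ht : 0 ≤ t) (hb : 0 ≤ b) (m : ℕ)
    (hI : I ≤ (aConst (2 * m + 1) * b) ^ (2 * m + 1)) :
    t ^ (2 * m + 1) / (2 * m + 1)! * I ≤ b * t * (((b * t) ^ 2 / 2) ^ m / m !) :=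
  calc t ^ (2 * m + 1) / (2 * m + 1)! * I
      ≤ t ^ (2 * m + 1) / (2 * m + 1)! *
          ((2 * m + 1).descFactorial (m + 1) / 2 ^ m * b ^ (2 * m + 1)) := by
        refine mul_le_mul_of_nonneg_left (hI.trans ?_) (by positivity)
        rw [mul_pow]
        gcongr
        exact aConst_two_mul_add_one_pow_le m
    _ = (b * t) ^ (2 * m + 1) / (2 * m + 1)! * ((2 * m + 1).descFactorial (m + 1) / 2 ^ m) := by
        ring
    _ = _ := pow_two_mul_add_one_div_factorial_mul_descFactorial _ _

lemma integral_exp_mul_eq_tsum {Ω : Type*} [MeasurableSpace Ω] {P : Measure Ω} {U : Ω → ℝ}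
    (hU_nonneg : ∀ ω, 0 ≤ U ω) (hU_int : ∀ n : ℕ, Integrable (fun ω ↦ U ω ^ n) P) {t : ℝ}
    (ht : 0 ≤ t) (hsum : Summable fun n ↦ t ^ n / n ! * ∫ ω, U ω ^ n ∂P) :
    ∫ ω, Real.exp (t * U ω) ∂P = ∑' n, t ^ n / n ! * ∫ ω, U ω ^ n ∂P := by
  have hexp (ω : Ω) : ∑' n, t ^ n / n ! * U ω ^ n = Real.exp (t * U ω) := by
    rw [← (Real.hasSum_pow_div_factorial (t * U ω)).tsum_eq]
    congr 1 with n
    ring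
  have hnorm (n : ℕ) (ω : Ω) : ‖t ^ n / n ! * U ω ^ n‖ = t ^ n / n ! * U ω ^ n :=
    Real.norm_of_nonneg (by have := hU_nonneg ω; positivity)
  simp_rw [← hexp]
  rw [← integral_tsum_of_summable_integral_norm (fun n ↦ (hU_int n).const_mul _)]
  · simp_rw [integral_const_mul]
  · simpa only [hnorm, integral_const_mul] using hsum

lemma integral_pow_le_aConst_mul_pow {Ω : Type*} [MeasurableSpace Ω] {P : Measure Ω}
    [IsProbabilityMeasure P] {U : Ω → ℝ} (hU_nonneg : ∀ ω, 0 ≤ U ω) {b : ℝ}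
    (hmom : ∀ r : ℕ, 1 ≤ r → (∫ ω, U ω ^ r ∂P) ^ ((r : ℝ)⁻¹) ≤ aConst r * b) (r : ℕ) :
    ∫ ω, U ω ^ r ∂P ≤ (aConst r * b) ^ r := by
  rcases eq_or_ne r 0 with rfl | hr
  · simp
  have hI : 0 ≤ ∫ ω, U ω ^ r ∂P := integral_nonneg fun ω ↦ pow_nonneg (hU_nonneg ω) r
  calc ∫ ω, U ω ^ r ∂P = ((∫ ω, U ω ^ r ∂P) ^ ((r : ℝ)⁻¹)) ^ r :=
        (Real.rpow_inv_natCast_pow hI hr).symm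
    _ ≤ (aConst r * b) ^ r := pow_le_pow_left₀ (by positivity) (hmom r (by omega)) r

theorem mgf_bound_of_khintchine_moments_general
    (Ω : Type*) [MeasurableSpace Ω] (P : Measure Ω) [IsProbabilityMeasure P]
    (U : Ω → ℝ) (hU_nonneg : ∀ ω, 0 ≤ U ω)
    (hU_int : ∀ r : ℕ, Integrable (fun ω => U ω ^ r) P)
    (b : ℝ)
    (hmom : ∀ r : ℕ, 1 ≤ r → (∫ ω, U ω ^ r ∂P) ^ ((r : ℝ)⁻¹) ≤ aConst r * b) :
    ∀ t : ℝ, 0 ≤ t →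
      ∫ ω, Real.exp (t * U ω) ∂P ≤ Real.exp ((b * t) ^ 2 / 2 + b * t) := by
  intro t ht
  have hmoment := integral_pow_le_aConst_mul_pow hU_nonneg hmom
  have hb : 0 ≤ b := by
    simpa [aConst_one] using (integral_nonneg fun ω ↦ by simpa using hU_nonneg ω).trans (hmoment 1)
  set c : ℕ → ℝ := fun n ↦ t ^ n / n ! * ∫ ω, U ω ^ n ∂P
  have hc_nonneg (n : ℕ) : 0 ≤ c n :=
    mul_nonneg (by positivity) (integral_nonneg fun ω ↦ pow_nonneg (hU_nonneg ω) n)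
  have hc_even (m : ℕ) := pow_two_mul_div_factorial_mul_le ht m (hmoment (2 * m))
  have hc_odd (m : ℕ) := pow_two_mul_add_one_div_factorial_mul_le ht hb m (hmoment (2 * m + 1))
  have hseries := Real.hasSum_pow_div_factorial ((b * t) ^ 2 / 2)
  have hodd_sum := hseries.summable.mul_left (b * t)
  calc ∫ ω, Real.exp (t * U ω) ∂P = ∑' n, c n := integral_exp_mul_eq_tsum hU_nonneg hU_int ht
        (summable_of_nonneg_of_even_odd_le hc_nonneg hseries.summable hodd_sum hc_even hc_odd)
    _ ≤ Real.exp ((b * t) ^ 2 / 2) + b * t * Real.exp ((b * t) ^ 2 / 2) := by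
        simpa only [tsum_mul_left, hseries.tsum_eq] using
          tsum_le_of_even_odd_le hc_nonneg hseries.summable hodd_sum hc_even hc_odd
    _ ≤ Real.exp ((b * t) ^ 2 / 2 + b * t) := Real.exp_add_mul_exp_le_exp_add _ _

/-- If a nonnegative random variable `U` satisfies the moment bounds
`E(U^r)^{1/r} ≤ a(r)·b` for all integers `r ≥ 1`, then its moment generating function
satisfies `E(e^{tU}) ≤ exp((bt)²/2 + bt)` for every `t ≥ 0`. -/
theorem mgf_bound_of_khintchine_moments
    (Ω : Type*) [MeasurableSpace Ω] (P : Measure Ω) [IsProbabilityMeasure P]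
    (U : Ω → ℝ) (hU_meas : Measurable U) (hU_nonneg : ∀ ω, 0 ≤ U ω)
    (hU_int : ∀ r : ℕ, Integrable (fun ω => U ω ^ r) P)
    (b : ℝ)
    (hmom : ∀ r : ℕ, 1 ≤ r → (∫ ω, U ω ^ r ∂P) ^ ((r : ℝ)⁻¹) ≤ aConst r * b) :
    ∀ t : ℝ, 0 ≤ t →
      ∫ ω, Real.exp (t * U ω) ∂P ≤ Real.exp ((b * t) ^ 2 / 2 + b * t) :=
  mgf_bound_of_khintchine_moments_general Ω P U hU_nonneg hU_int b hmom
end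

section
/- In the particle approximation scheme for the Snell envelope (Markov kernels M_{k+1}(x,dy) = H_{k+1}(x,y)λ_{k+1}(dy) with strictly positive densities, bounded nonnegative f_k, G_k, Q_{k+1}(f) := G_k · M_{k+1}(f), Φ_{k+1}(η)(f) := η(G_k M_{k+1}(f))/η(G_k); η^N_{k+1} the empirical measure of N samples that are conditionally i.i.d. with law Φ_{k+1}(η^N_k) given 𝓕^N_k; random kernels Q̂_{k+1}(x, dy) := η^N_{k+1}(dy)·G_k(x)H_{k+1}(x,y)η^N_k(G_k)/η^N_k(G_k H_{k+1}(·,y)); and backward recursions v_n = v̂_n = f_n, v_k = f_k ∨ Q_{k+1}(v_{k+1}), v̂_k = f_k ∨ Q̂_{k+1}(v̂_{k+1})), the particle estimator over-estimates the Snell envelope: for every 0 ≤ k ≤ n and every x_k ∈ E_k, E(v̂_k(x_k)) ≥ v_k(x_k). -/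
/-!
Strengthen the claim to: for every `𝓕_k`-measurable weight `Z ≥ 0` and `𝓕_k`-measurable random
point `Y`, `E[Z v_k(Y)] ≤ E[Z v̂_k(Y)]`, and prove it by backward induction on `k`, in `ℝ≥0∞` so
that no integrability is needed. The stopping and continuation parts of
`v_k = f_k ∨ Q_{k+1} v_{k+1}` are separated by the `𝓕_k`-measurable event
`{f_k(Y) < Q_{k+1} v_{k+1}(Y)}`. Given `𝓕_k`, each particle `ξ^i_{k+1}` has law `Φ_{k+1}(η^N_k)`,
whose density `η^N_k(G_k H_{k+1}(·, y)) / η^N_k(G_k)` cancels the denominator of the weight `w` of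
`Q̂_{k+1}`; by the freezing lemma,
`E[Z w(Y, ξ^i_{k+1}) v_{k+1}(ξ^i_{k+1})] = E[Z Q_{k+1} v_{k+1}(Y)]`.
The induction hypothesis, with the `𝓕_{k+1}`-measurable weight `Z w(Y, ξ^i_{k+1})`, replaces
`v_{k+1}` by `v̂_{k+1}` here, and averaging over `i` gives `E[Z Q̂_{k+1} v̂_{k+1}(Y)]`.
-/

open MeasureTheory ProbabilityTheory ENNReal

section General

variable {Ω β : Type*} [mβ : MeasurableSpace β]

theorem ofReal_integral_le_lintegral_ofReal [MeasurableSpace Ω] {P : Measure Ω} (f : Ω → ℝ) :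
    ENNReal.ofReal (∫ ω, f ω ∂P) ≤ ∫⁻ ω, ENNReal.ofReal (f ω) ∂P := by
  by_cases hf : Integrable f P
  · rw [integral_eq_lintegral_pos_part_sub_lintegral_neg_part hf]
    exact (ofReal_le_ofReal (sub_le_self _ toReal_nonneg)).trans ofReal_toReal_le
  · simp [integral_undef hf]

theorem sum_lintegral_le_lintegral_sum [MeasurableSpace Ω] {P : Measure Ω} {ι : Type*}
    (s : Finset ι) (f : ι → Ω → ℝ≥0∞) :
    ∑ i ∈ s, ∫⁻ ω, f i ω ∂P ≤ ∫⁻ ω, ∑ i ∈ s, f i ω ∂P := by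
  classical
  induction s using Finset.induction_on with
  | empty => simp
  | insert i s hi ih =>
    simp only [Finset.sum_insert hi]
    exact (add_le_add le_rfl ih).trans (le_lintegral_add _ _)

variable {m : MeasurableSpace Ω} [m0 : MeasurableSpace Ω] {P : Measure Ω}

theorem lintegral_mul_max_le (hm : m ≤ m0) {a b c : Ω → ℝ≥0∞} (ha : Measurable[m] a)
    (hb : Measurable[m] b)
    (hac : ∀ Z, Measurable[m] Z → ∫⁻ ω, Z ω * a ω ∂P ≤ ∫⁻ ω, Z ω * c ω ∂P)
    (hbc : ∀ Z, Measurable[m] Z → ∫⁻ ω, Z ω * b ω ∂P ≤ ∫⁻ ω, Z ω * c ω ∂P)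
    {Z : Ω → ℝ≥0∞} (hZ : Measurable[m] Z) :
    ∫⁻ ω, Z ω * max (a ω) (b ω) ∂P ≤ ∫⁻ ω, Z ω * c ω ∂P := by
  set S := {ω | a ω < b ω}
  have hS : MeasurableSet[m] S := measurableSet_lt ha hb
  have hsplit : ∀ d : Ω → ℝ≥0∞, ∀ ω,
      Z ω * d ω = S.indicator Z ω * d ω + Sᶜ.indicator Z ω * d ω := by
    intro d ω
    by_cases hω : ω ∈ S <;> simp [hω]
  calc ∫⁻ ω, Z ω * max (a ω) (b ω) ∂P
      = ∫⁻ ω, S.indicator Z ω * b ω + Sᶜ.indicator Z ω * a ω ∂P := by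
        refine lintegral_congr fun ω => ?_
        by_cases hω : a ω < b ω
        · simp [S, hω, max_eq_right hω.le]
        · simp [S, hω, max_eq_left (not_lt.1 hω)]
    _ = ∫⁻ ω, S.indicator Z ω * b ω ∂P + ∫⁻ ω, Sᶜ.indicator Z ω * a ω ∂P :=
        lintegral_add_left (((hZ.indicator hS).mul hb).mono hm le_rfl) _
    _ ≤ ∫⁻ ω, S.indicator Z ω * c ω ∂P + ∫⁻ ω, Sᶜ.indicator Z ω * c ω ∂P :=
        add_le_add (hbc _ (hZ.indicator hS)) (hac _ (hZ.indicator hS.compl))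
    _ ≤ ∫⁻ ω, Z ω * c ω ∂P := by
        simp_rw [hsplit c]
        exact le_lintegral_add _ _

theorem measure_inter_preimage_eq_setLIntegral (hm : m ≤ m0) [IsFiniteMeasure P] {X : Ω → β}
    (hX : Measurable X) {B : Set β} (hB : MeasurableSet B) {φ : Ω → ℝ}
    (hφ : P[fun ω => B.indicator 1 (X ω) | m] =ᵐ[P] φ) {A : Set Ω} (hA : MeasurableSet[m] A) :
    P (A ∩ X ⁻¹' B) = ∫⁻ ω in A, ENNReal.ofReal (φ ω) ∂P := by
  have hind : (fun ω => B.indicator (1 : β → ℝ) (X ω)) = (X ⁻¹' B).indicator 1 := by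
    ext ω; by_cases hω : X ω ∈ B <;> simp [hω]
  rw [hind] at hφ
  have hφ0 : 0 ≤ᵐ[P] φ :=
    (condExp_nonneg (ae_of_all _ (Set.indicator_nonneg fun _ _ => zero_le_one))).trans_eq hφ
  rw [← ofReal_integral_eq_lintegral_ofReal (integrable_condExp.congr hφ).integrableOn
      (ae_restrict_of_ae hφ0), ← integral_congr_ae (ae_restrict_of_ae hφ),
    setIntegral_condExp hm ((integrable_const 1).indicator (hX hB)) hA,
    integral_indicator_one (hX hB), measureReal_restrict_apply (hX hB), Set.inter_comm,
    ofReal_measureReal]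

theorem condExp_comp_ae_eq_of_condExp_prod {ι : Type*} [Fintype ι] [DecidableEq ι]
    {X : ι → Ω → β} {φ : (β → ℝ) → Ω → ℝ}
    (hcond : ∀ g : ι → β → ℝ, (∀ i, Measurable (g i)) → (∀ i, ∃ C, ∀ y, |g i y| ≤ C) →
      P[fun ω => ∏ i, g i (X i ω) | m] =ᵐ[P] fun ω => ∏ i, φ (g i) ω)
    (hφ1 : φ 1 = 1) (i : ι) {g : β → ℝ} (hg : Measurable g) (hg_bdd : ∃ C, ∀ y, |g y| ≤ C) :
    P[fun ω => g (X i ω) | m] =ᵐ[P] φ g := by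
  set g' := Function.update (1 : ι → β → ℝ) i g
  have hg' : ∀ j ≠ i, g' j = 1 := fun j hj => Function.update_of_ne hj _ _
  have h := hcond g'
    (fun j => by rcases eq_or_ne j i with rfl | hj <;> simp [g', *, measurable_one])
    (fun j => by
      rcases eq_or_ne j i with rfl | hj
      · simpa [g'] using hg_bdd
      · exact ⟨1, fun y => by simp [hg' j hj]⟩)
  have hL : (fun ω => ∏ j, g' j (X j ω)) = fun ω => g (X i ω) := funext fun ω => by
    rw [Fintype.prod_eq_single i fun j hj => by rw [hg' j hj]; rfl]
    simp [g']
  have hR : (fun ω => ∏ j, φ (g' j) ω) = φ g := funext fun ω => by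
    rw [Fintype.prod_eq_single i fun j hj => by rw [hg' j hj, hφ1]; rfl]
    simp [g']
  rwa [hL, hR] at h

theorem lintegral_comp_eq_lintegral_kernel (hm : m ≤ m0) [IsFiniteMeasure P]
    (κ : Kernel[m] Ω β) [IsSFiniteKernel κ] {X : Ω → β} (hX : Measurable X)
    (hX_law : ∀ A, MeasurableSet[m] A → ∀ B, MeasurableSet B →
      P (A ∩ X ⁻¹' B) = ∫⁻ ω in A, κ ω B ∂P)
    {g : Ω → β → ℝ≥0∞} (hg : Measurable[m.prod mβ] (Function.uncurry g)) :
    ∫⁻ ω, g ω (X ω) ∂P = ∫⁻ ω, ∫⁻ y, g ω y ∂κ ω ∂P := by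
  let graph : Ω → Ω × β := fun ω => (ω, X ω)
  have hgraph : Measurable[m0, m.prod mβ] graph := (measurable_id'' hm).prodMk hX
  have hlaw : @Measure.map _ _ _ (m.prod mβ) graph P = P.trim hm ⊗ₘ κ := by
    have : IsFiniteMeasure (@Measure.map _ _ _ (m.prod mβ) graph P) :=
      ⟨by rw [Measure.map_apply hgraph MeasurableSet.univ]; exact measure_lt_top _ _⟩
    refine Measure.ext_prod fun {A B} hA hB => ?_
    rw [Measure.map_apply hgraph (hA.prod hB), Measure.compProd_apply_prod hA hB,
      setLIntegral_trim hm (κ.measurable_coe hB) hA]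
    exact hX_law A hA B hB
  calc ∫⁻ ω, g ω (X ω) ∂P
      = ∫⁻ p, Function.uncurry g p ∂(@Measure.map _ _ _ (m.prod mβ) graph P) :=
        (@lintegral_map _ _ _ (m.prod mβ) _ _ _ hg hgraph).symm
    _ = ∫⁻ ω, ∫⁻ y, g ω y ∂κ ω ∂(P.trim hm) := by
        rw [hlaw, Measure.lintegral_compProd hg]; rfl
    _ = ∫⁻ ω, ∫⁻ y, g ω y ∂κ ω ∂P :=
        lintegral_trim hm (hg.lintegral_kernel_prod_right' (κ := κ))

end General

section Weights

variable {ι α β : Type*} [Fintype ι] {G : α → ℝ} {H : α → β → ℝ}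

/-- `Φ(η)(dy) = selectionDensity G H x y ν(dy)` when `η` is the empirical measure of `x` and
`M(a, dy) = H a y ν(dy)`. -/
noncomputable def selectionDensity (G : α → ℝ) (H : α → β → ℝ) (x : ι → α) (y : β) : ℝ :=
  (∑ j, G (x j) * H (x j) y) / ∑ j, G (x j)

/-- `Q̂(z, dy) = particleWeight G H x z y η'(dy)`, where `η` and `η'` are the empirical measures of
the current particles `x` and of the next ones. -/
noncomputable def particleWeight (G : α → ℝ) (H : α → β → ℝ) (x : ι → α) (z : α) (y : β) : ℝ :=
  G z * H z y * (∑ j, G (x j)) / ∑ j, G (x j) * H (x j) y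

noncomputable def particleOp {N : ℕ} (G : α → ℝ) (H : α → β → ℝ) (x : Fin N → α)
    (x' : Fin N → β) (h : β → ℝ) (z : α) : ℝ :=
  (N : ℝ)⁻¹ * ∑ i, particleWeight G H x z (x' i) * h (x' i)

lemma selectionDensity_nonneg (hG : 0 ≤ G) (hH : ∀ a y, 0 ≤ H a y) (x : ι → α) (y : β) :
    0 ≤ selectionDensity G H x y :=
  div_nonneg (Finset.sum_nonneg fun _ _ => mul_nonneg (hG _) (hH _ y))
    (Finset.sum_nonneg fun _ _ => hG _)

lemma particleWeight_nonneg (hG : 0 ≤ G) (hH : ∀ a y, 0 ≤ H a y) (x : ι → α) (z : α) (y : β) :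
    0 ≤ particleWeight G H x z y :=
  div_nonneg (mul_nonneg (mul_nonneg (hG z) (hH z y)) (Finset.sum_nonneg fun _ _ => hG _))
    (Finset.sum_nonneg fun _ _ => mul_nonneg (hG _) (hH _ y))

lemma selectionDensity_mul_particleWeight (hG : 0 ≤ G) (hH : ∀ a y, 0 < H a y) {x : ι → α}
    (hS : 0 < ∑ j, G (x j)) (z : α) (y : β) :
    selectionDensity G H x y * particleWeight G H x z y = G z * H z y := by
  obtain ⟨j, -, hj⟩ := Finset.exists_lt_of_sum_lt (f := fun _ => 0) (g := fun j => G (x j))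
    (by simpa using hS)
  have hT : 0 < ∑ j, G (x j) * H (x j) y := Finset.sum_pos'
    (fun j _ => mul_nonneg (hG _) (hH _ y).le) ⟨j, Finset.mem_univ j, mul_pos hj (hH _ y)⟩
  unfold selectionDensity particleWeight
  field_simp

lemma ofReal_particleOp {N : ℕ} [NeZero N] (hG : 0 ≤ G) (hH : ∀ a y, 0 ≤ H a y)
    (x : Fin N → α) (x' : Fin N → β) {h : β → ℝ} (hh : ∀ i, 0 ≤ h (x' i)) (z : α) :
    ENNReal.ofReal (particleOp G H x x' h z) = (N : ℝ≥0∞)⁻¹ *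
      ∑ i, ENNReal.ofReal (particleWeight G H x z (x' i)) * ENNReal.ofReal (h (x' i)) := by
  have hN : (0 : ℝ) < N := by exact_mod_cast Nat.pos_of_ne_zero (NeZero.ne N)
  rw [particleOp, ofReal_mul (inv_nonneg.2 hN.le), ofReal_inv_of_pos hN, ofReal_natCast,
    ofReal_sum_of_nonneg fun i _ => mul_nonneg (particleWeight_nonneg hG hH _ _ _) (hh i)]
  simp_rw [ofReal_mul (particleWeight_nonneg hG hH _ _ _)]

end Weights

section Selection

variable {ι α β : Type*} [Fintype ι] [MeasurableSpace β] {ν : Measure β} {G : α → ℝ}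
  {H : α → β → ℝ}

/-- `Φ(η)(g)` for the empirical measure `η` of `x`. -/
noncomputable def selectionMean (ν : Measure β) (G : α → ℝ) (H : α → β → ℝ) (x : ι → α)
    (g : β → ℝ) : ℝ :=
  (∑ j, G (x j) * ∫ y, H (x j) y * g y ∂ν) / ∑ j, G (x j)

lemma integrable_selectionDensity (hH1 : ∀ a, ∫ y, H a y ∂ν = 1) (x : ι → α) :
    Integrable (selectionDensity G H x) ν :=
  (integrable_finsetSum _ fun j _ =>
    (Integrable.of_integral_ne_zero (by rw [hH1 (x j)]; exact one_ne_zero)).const_mul _).div_const _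

lemma integral_selectionDensity_mul (hH1 : ∀ a, ∫ y, H a y ∂ν = 1) (x : ι → α) {g : β → ℝ}
    (hg : Measurable g) (hg_bdd : ∃ C, ∀ y, |g y| ≤ C) :
    ∫ y, selectionDensity G H x y * g y ∂ν = selectionMean ν G H x g := by
  obtain ⟨C, hC⟩ := hg_bdd
  have hHg : ∀ a, Integrable (fun y => H a y * g y) ν := fun a =>
    (Integrable.of_integral_ne_zero (by rw [hH1 a]; exact one_ne_zero)).mul_bdd
      hg.aestronglyMeasurable (ae_of_all _ hC)
  simp_rw [selectionDensity, selectionMean, div_mul_eq_mul_div, Finset.sum_mul, mul_assoc]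
  rw [integral_div, integral_finsetSum _ fun j _ => (hHg _).const_mul _]
  simp_rw [integral_const_mul]

variable [MeasurableSpace α]

lemma measurable_selectionDensity (hG : Measurable G) (hH : Measurable (Function.uncurry H)) :
    Measurable (Function.uncurry (selectionDensity (ι := ι) G H)) := by
  unfold selectionDensity
  fun_prop

lemma measurable_particleWeight (hG : Measurable G) (hH : Measurable (Function.uncurry H)) :
    Measurable fun p : (ι → α) × α × β => particleWeight G H p.1 p.2.1 p.2.2 := by
  unfold particleWeight
  fun_prop

lemma measurable_mul_integral [SFinite ν] (hG : Measurable G)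
    (hH : Measurable (Function.uncurry H)) {h : β → ℝ} (hh : Measurable h) :
    Measurable fun z => G z * ∫ y, H z y * h y ∂ν :=
  hG.mul ((hH.mul (hh.comp measurable_snd)).stronglyMeasurable.integral_prod_right').measurable

variable [SFinite ν]

noncomputable def selectionKernel (ν : Measure β) [SFinite ν] (G : α → ℝ) (H : α → β → ℝ) :
    Kernel (ι → α) β :=
  (Kernel.const _ ν).withDensity fun x y => ENNReal.ofReal (selectionDensity G H x y)

instance : IsSFiniteKernel (selectionKernel (ι := ι) ν G H) :=
  Kernel.IsSFiniteKernel.withDensity _ fun _ _ => ENNReal.ofReal_ne_top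

lemma measurable_ofReal_selectionDensity (hG : Measurable G)
    (hH : Measurable (Function.uncurry H)) :
    Measurable (Function.uncurry fun x y => ENNReal.ofReal (selectionDensity (ι := ι) G H x y)) :=
  ENNReal.measurable_ofReal.comp (measurable_selectionDensity hG hH)

lemma selectionKernel_apply (hG : Measurable G) (hG0 : 0 ≤ G)
    (hH : Measurable (Function.uncurry H)) (hH0 : ∀ a y, 0 ≤ H a y)
    (hH1 : ∀ a, ∫ y, H a y ∂ν = 1) (x : ι → α) {B : Set β} (hB : MeasurableSet B) :
    selectionKernel ν G H x B = ENNReal.ofReal (selectionMean ν G H x (B.indicator 1)) := by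
  have hind : (fun y => selectionDensity G H x y * B.indicator 1 y)
      = B.indicator (selectionDensity G H x) := by
    ext y; by_cases hy : y ∈ B <;> simp [hy]
  rw [selectionKernel, Kernel.withDensity_apply' _ (measurable_ofReal_selectionDensity hG hH),
    Kernel.const_apply, ← integral_selectionDensity_mul hH1 x (measurable_one.indicator hB)
      ⟨1, fun y => by by_cases hy : y ∈ B <;> simp [hy]⟩, hind, integral_indicator hB,
    ofReal_integral_eq_lintegral_ofReal (integrable_selectionDensity hH1 x).integrableOn
      (ae_of_all _ (selectionDensity_nonneg hG0 hH0 x))]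

end Selection

section Particle

variable {Ω ι α β : Type*} [Fintype ι] [MeasurableSpace α] [MeasurableSpace β]
  {m m' : MeasurableSpace Ω} [m0 : MeasurableSpace Ω] {P : Measure Ω} [IsFiniteMeasure P]
  {ν : Measure β} [SFinite ν] {G : α → ℝ} {H : α → β → ℝ}

theorem measure_inter_preimage_eq_selectionKernel (hm : m ≤ m0) (hG : Measurable G) (hG0 : 0 ≤ G)
    (hH : Measurable (Function.uncurry H)) (hH0 : ∀ a y, 0 ≤ H a y)
    (hH1 : ∀ a, ∫ y, H a y ∂ν = 1) {x : ι → Ω → α} (hS : ∀ ω, 0 < ∑ j, G (x j ω))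
    {ι' : Type*} [Fintype ι'] {X : ι' → Ω → β} (hX : ∀ i, Measurable (X i))
    (hcond : ∀ g : ι' → β → ℝ, (∀ i, Measurable (g i)) → (∀ i, ∃ C, ∀ y, |g i y| ≤ C) →
      P[fun ω => ∏ i, g i (X i ω) | m] =ᵐ[P]
        fun ω => ∏ i, selectionMean ν G H (fun j => x j ω) (g i))
    (i : ι') {A : Set Ω} (hA : MeasurableSet[m] A) {B : Set β} (hB : MeasurableSet B) :
    P (A ∩ X i ⁻¹' B) = ∫⁻ ω in A, selectionKernel ν G H (fun j => x j ω) B ∂P := by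
  classical
  rw [measure_inter_preimage_eq_setLIntegral hm (hX i) hB
    (condExp_comp_ae_eq_of_condExp_prod (φ := fun g ω => selectionMean ν G H (fun j => x j ω) g)
      hcond (funext fun ω => by simp [selectionMean, hH1, (hS ω).ne']) i
      (measurable_one.indicator hB)
      ⟨1, fun y => by by_cases hy : y ∈ B <;> simp [hy]⟩) hA]
  exact lintegral_congr fun ω => (selectionKernel_apply hG hG0 hH hH0 hH1 _ hB).symm

theorem lintegral_mul_particleWeight_eq (hm : m ≤ m0) (hG : Measurable G) (hG0 : 0 ≤ G)
    (hH : Measurable (Function.uncurry H)) (hH0 : ∀ a y, 0 < H a y)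
    {x : ι → Ω → α} (hx : ∀ j, Measurable[m] (x j)) (hS : ∀ ω, 0 < ∑ j, G (x j ω))
    {X : Ω → β} (hX : Measurable X)
    (hX_law : ∀ A, MeasurableSet[m] A → ∀ B, MeasurableSet B →
      P (A ∩ X ⁻¹' B) = ∫⁻ ω in A, selectionKernel ν G H (fun j => x j ω) B ∂P)
    {Z : Ω → ℝ≥0∞} (hZ : Measurable[m] Z) {Y : Ω → α} (hY : Measurable[m] Y)
    {h : β → ℝ} (hh : Measurable h) :
    ∫⁻ ω, Z ω * ENNReal.ofReal (particleWeight G H (fun j => x j ω) (Y ω) (X ω) * h (X ω)) ∂P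
      = ∫⁻ ω, Z ω * ∫⁻ y, ENNReal.ofReal (G (Y ω) * H (Y ω) y * h y) ∂ν ∂P := by
  have hxm : Measurable[m] fun ω j => x j ω := @measurable_pi_lambda _ _ _ m _ _ hx
  have hg : Measurable[m.prod _] (Function.uncurry fun ω y =>
      Z ω * ENNReal.ofReal (particleWeight G H (fun j => x j ω) (Y ω) y * h y)) :=
    (hZ.comp measurable_fst).mul (ENNReal.measurable_ofReal.comp
      (((measurable_particleWeight hG hH).comp ((hxm.comp measurable_fst).prodMk
        ((hY.comp measurable_fst).prodMk measurable_snd))).mul (hh.comp measurable_snd)))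
  rw [lintegral_comp_eq_lintegral_kernel hm
    (Kernel.comap (mγ := m) (selectionKernel ν G H) _ hxm) hX
    (by simpa only [Kernel.comap_apply] using hX_law) hg]
  refine lintegral_congr fun ω => ?_
  rw [Kernel.comap_apply, selectionKernel, Kernel.lintegral_withDensity _
      (measurable_ofReal_selectionDensity hG hH) _ (Measurable.of_uncurry_left hg),
    Kernel.const_apply, ← lintegral_const_mul _
      (show Measurable fun y => ENNReal.ofReal (G (Y ω) * H (Y ω) y * h y) from
        ENNReal.measurable_ofReal.comp ((measurable_const.mul hH.of_uncurry_left).mul hh))]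
  refine lintegral_congr fun y => ?_
  rw [mul_left_comm, ← ofReal_mul (selectionDensity_nonneg hG0 (fun a y => (hH0 a y).le) _ _),
    ← mul_assoc, selectionDensity_mul_particleWeight hG0 hH0 (hS ω)]

theorem lintegral_mul_ofReal_le_particleOp (hm : m ≤ m') (hm' : m' ≤ m0) (hG : Measurable G)
    (hG0 : 0 ≤ G) (hH : Measurable (Function.uncurry H)) (hH0 : ∀ a y, 0 < H a y)
    {N : ℕ} [NeZero N] {x : Fin N → Ω → α} (hx : ∀ j, Measurable[m] (x j))
    (hS : ∀ ω, 0 < ∑ j, G (x j ω)) {X : Fin N → Ω → β} (hX : ∀ i, Measurable[m'] (X i))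
    (hX_law : ∀ i A, MeasurableSet[m] A → ∀ B, MeasurableSet B →
      P (A ∩ X i ⁻¹' B) = ∫⁻ ω in A, selectionKernel ν G H (fun j => x j ω) B ∂P)
    {h : β → ℝ} (hh : Measurable h) {ĥ : Ω → β → ℝ} (hĥ0 : ∀ ω y, 0 ≤ ĥ ω y)
    (hle : ∀ Z : Ω → ℝ≥0∞, Measurable[m'] Z → ∀ Y : Ω → β, Measurable[m'] Y →
      ∫⁻ ω, Z ω * ENNReal.ofReal (h (Y ω)) ∂P ≤ ∫⁻ ω, Z ω * ENNReal.ofReal (ĥ ω (Y ω)) ∂P)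
    {Z : Ω → ℝ≥0∞} (hZ : Measurable[m] Z) {Y : Ω → α} (hY : Measurable[m] Y) :
    ∫⁻ ω, Z ω * ENNReal.ofReal (G (Y ω) * ∫ y, H (Y ω) y * h y ∂ν) ∂P ≤ ∫⁻ ω, Z ω *
      ENNReal.ofReal (particleOp G H (fun j => x j ω) (fun i => X i ω) (ĥ ω) (Y ω)) ∂P := by
  set w : Fin N → Ω → ℝ≥0∞ := fun i ω =>
    Z ω * ENNReal.ofReal (particleWeight G H (fun j => x j ω) (Y ω) (X i ω))
  have hw : ∀ i, Measurable[m'] (w i) := fun i =>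
    (hZ.mono hm le_rfl).mul (ENNReal.measurable_ofReal.comp ((measurable_particleWeight hG hH).comp
      ((@measurable_pi_lambda _ _ _ m _ _ hx).mono hm le_rfl |>.prodMk
        ((hY.mono hm le_rfl).prodMk (hX i)))))
  have hunbiased : ∀ i, ∫⁻ ω, w i ω * ENNReal.ofReal (h (X i ω)) ∂P
      = ∫⁻ ω, Z ω * ∫⁻ y, ENNReal.ofReal (G (Y ω) * H (Y ω) y * h y) ∂ν ∂P := fun i => by
    rw [← lintegral_mul_particleWeight_eq (hm.trans hm') hG hG0 hH hH0 hx hS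
      ((hX i).mono hm' le_rfl) (hX_law i) hZ hY hh]
    refine lintegral_congr fun ω => ?_
    rw [mul_assoc, ← ofReal_mul (particleWeight_nonneg hG0 (fun a y => (hH0 a y).le) _ _ _)]
  have hN : (N : ℝ≥0∞) ≠ 0 := Nat.cast_ne_zero.2 (NeZero.ne N)
  calc ∫⁻ ω, Z ω * ENNReal.ofReal (G (Y ω) * ∫ y, H (Y ω) y * h y ∂ν) ∂P
      ≤ ∫⁻ ω, Z ω * ∫⁻ y, ENNReal.ofReal (G (Y ω) * H (Y ω) y * h y) ∂ν ∂P := by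
        gcongr with ω
        simp_rw [mul_assoc, ← integral_const_mul]
        exact ofReal_integral_le_lintegral_ofReal _
    _ = (N : ℝ≥0∞)⁻¹ * ∑ i, ∫⁻ ω, w i ω * ENNReal.ofReal (h (X i ω)) ∂P := by
        simp_rw [hunbiased, Finset.sum_const, Finset.card_univ, Fintype.card_fin, nsmul_eq_mul,
          ← mul_assoc, ENNReal.inv_mul_cancel hN (natCast_ne_top N), one_mul]
    _ ≤ (N : ℝ≥0∞)⁻¹ * ∑ i, ∫⁻ ω, w i ω * ENNReal.ofReal (ĥ ω (X i ω)) ∂P :=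
        mul_le_mul_right (Finset.sum_le_sum fun i _ => hle _ (hw i) _ (hX i)) _
    _ ≤ ∫⁻ ω, (N : ℝ≥0∞)⁻¹ * ∑ i, w i ω * ENNReal.ofReal (ĥ ω (X i ω)) ∂P := by
        rw [lintegral_const_mul' _ _ (inv_ne_top.2 hN)]
        gcongr
        exact sum_lintegral_le_lintegral_sum _ _
    _ = _ := by
        refine lintegral_congr fun ω => ?_
        rw [ofReal_particleOp hG0 (fun a y => (hH0 a y).le) _ _ fun i => hĥ0 ω _,
          Finset.mul_sum, Finset.mul_sum, Finset.mul_sum]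
        exact Finset.sum_congr rfl fun i _ => by ring

theorem lintegral_mul_ofReal_max_le (hm : m ≤ m') (hm' : m' ≤ m0) {f : α → ℝ} (hf : Measurable f)
    (hG : Measurable G) (hG0 : 0 ≤ G) (hH : Measurable (Function.uncurry H))
    (hH0 : ∀ a y, 0 < H a y) {N : ℕ} [NeZero N] {x : Fin N → Ω → α}
    (hx : ∀ j, Measurable[m] (x j)) (hS : ∀ ω, 0 < ∑ j, G (x j ω)) {X : Fin N → Ω → β}
    (hX : ∀ i, Measurable[m'] (X i))
    (hX_law : ∀ i A, MeasurableSet[m] A → ∀ B, MeasurableSet B →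
      P (A ∩ X i ⁻¹' B) = ∫⁻ ω in A, selectionKernel ν G H (fun j => x j ω) B ∂P)
    {h : β → ℝ} (hh : Measurable h) {ĥ : Ω → β → ℝ} (hĥ0 : ∀ ω y, 0 ≤ ĥ ω y)
    (hle : ∀ Z : Ω → ℝ≥0∞, Measurable[m'] Z → ∀ Y : Ω → β, Measurable[m'] Y →
      ∫⁻ ω, Z ω * ENNReal.ofReal (h (Y ω)) ∂P ≤ ∫⁻ ω, Z ω * ENNReal.ofReal (ĥ ω (Y ω)) ∂P)
    {Z : Ω → ℝ≥0∞} (hZ : Measurable[m] Z) {Y : Ω → α} (hY : Measurable[m] Y) :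
    ∫⁻ ω, Z ω * ENNReal.ofReal (max (f (Y ω)) (G (Y ω) * ∫ y, H (Y ω) y * h y ∂ν)) ∂P
      ≤ ∫⁻ ω, Z ω * ENNReal.ofReal (max (f (Y ω))
        (particleOp G H (fun j => x j ω) (fun i => X i ω) (ĥ ω) (Y ω))) ∂P := by
  simp_rw [ofReal_max]
  refine lintegral_mul_max_le (hm.trans hm') (ENNReal.measurable_ofReal.comp (hf.comp hY))
    (ENNReal.measurable_ofReal.comp ((measurable_mul_integral hG hH hh).comp hY))
    (fun _ _ => lintegral_mono fun ω => by gcongr; exact le_max_left _ _)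
    (fun _ hZ' => ?_) hZ
  calc _ ≤ _ := lintegral_mul_ofReal_le_particleOp hm hm' hG hG0 hH hH0 hx hS hX hX_law hh hĥ0
        hle hZ' hY
    _ ≤ _ := lintegral_mono fun ω => by gcongr; exact le_max_right _ _

end Particle

theorem measurable_of_snell_rec {E : ℕ → Type*} [∀ k, MeasurableSpace (E k)] {n : ℕ}
    {lam : ∀ k, Measure (E (k + 1))} [∀ k, SFinite (lam k)] {H : ∀ k, E k → E (k + 1) → ℝ}
    (hH : ∀ k, Measurable (Function.uncurry (H k))) {f G : ∀ k, E k → ℝ}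
    (hf : ∀ k, Measurable (f k)) (hG : ∀ k, Measurable (G k)) {v : ∀ k, E k → ℝ}
    (hv_term : v n = f n)
    (hv_rec : ∀ k, k < n → ∀ x,
      v k x = max (f k x) (G k x * ∫ y, H k x y * v (k + 1) y ∂(lam k)))
    {k : ℕ} (hk : k ≤ n) : Measurable (v k) := by
  induction hk using Nat.decreasingInduction with
  | self => rw [hv_term]; exact hf n
  | of_succ k hk ih =>
    rw [funext (hv_rec k hk)]
    exact (hf k).max (measurable_mul_integral (hG k) (hH k) ih)

theorem particle_snell_overestimates_general
    (E : ℕ → Type*) [∀ k, MeasurableSpace (E k)]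
    (n : ℕ) (N : ℕ) (hN : 1 ≤ N)
    -- the Markov transitions `M_{k+1}(x,dy) = H_{k+1}(x,y) λ_{k+1}(dy)`
    (lam : ∀ k, Measure (E (k + 1))) [∀ k, SigmaFinite (lam k)]
    (H : ∀ k, E k → E (k + 1) → ℝ)
    (hH_meas : ∀ k, Measurable (Function.uncurry (H k)))
    (hH_pos : ∀ k x y, 0 < H k x y)
    (hMarkov : ∀ k x, ∫ y, H k x y ∂(lam k) = 1)
    -- the gain functions and potential functions
    (f G : ∀ k, E k → ℝ)
    (hf_meas : ∀ k, Measurable (f k)) (hG_meas : ∀ k, Measurable (G k))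
    (hf_nonneg : ∀ k x, 0 ≤ f k x) (hG_nonneg : ∀ k x, 0 ≤ G k x)
    -- the particle model: a filtered probability space
    (Ω : Type*) [mΩ : MeasurableSpace Ω] (P : Measure Ω) [IsProbabilityMeasure P]
    (F : ℕ → MeasurableSpace Ω) (hF_le : ∀ k, F k ≤ mΩ) (hF_mono : Monotone F)
    (ξ : ∀ k, Fin N → Ω → E k)
    (hξ_adapted : ∀ k i, Measurable[F k] (ξ k i))
    -- non-degeneracy: `η^N_k(G_k) > 0`
    (hGpos : ∀ k, k ≤ n → ∀ ω, 0 < ∑ i : Fin N, G k (ξ k i ω))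
    -- conditionally on `𝓕^N_k`, the particles `ξ^i_{k+1}` are i.i.d. with law `Φ_{k+1}(η^N_k)`
    (hcond : ∀ k, k < n → ∀ g : Fin N → E (k + 1) → ℝ,
      (∀ i, Measurable (g i)) → (∀ i, ∃ C, ∀ y, |g i y| ≤ C) →
      P[(fun ω => ∏ i : Fin N, g i (ξ (k + 1) i ω)) | F k]
        =ᵐ[P] fun ω => ∏ i : Fin N,
          (∑ j : Fin N, G k (ξ k j ω) * ∫ y, H k (ξ k j ω) y * g i y ∂(lam k))
            / (∑ j : Fin N, G k (ξ k j ω)))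
    -- the Snell envelope `v_k = f_k ∨ Q_{k+1}(v_{k+1})`
    (v : ∀ k, E k → ℝ)
    (hv_term : v n = f n)
    (hv_rec : ∀ k, k < n → ∀ x,
      v k x = max (f k x) (G k x * ∫ y, H k x y * v (k + 1) y ∂(lam k)))
    -- its particle approximation `v̂_k = f_k ∨ Q̂_{k+1}(v̂_{k+1})`
    (vhat : ∀ k, Ω → E k → ℝ)
    (hvhat_term : ∀ ω, vhat n ω = f n)
    (hvhat_rec : ∀ k, k < n → ∀ ω x,
      vhat k ω x = max (f k x)
        ((N : ℝ)⁻¹ * ∑ i : Fin N,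
          G k x * H k x (ξ (k + 1) i ω)
            * (∑ j : Fin N, G k (ξ k j ω))
            / (∑ j : Fin N, G k (ξ k j ω) * H k (ξ k j ω) (ξ (k + 1) i ω))
            * vhat (k + 1) ω (ξ (k + 1) i ω)))
    -- integrability of the estimator
    (hvhat_int : ∀ k (x : E k), Integrable (fun ω => vhat k ω x) P) :
    ∀ k, k ≤ n → ∀ x : E k, v k x ≤ ∫ ω, vhat k ω x ∂P := by
  have : NeZero N := ⟨by omega⟩
  have hvhat_nonneg : ∀ k, k ≤ n → ∀ ω x, 0 ≤ vhat k ω x := fun k hk ω x => by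
    rcases hk.lt_or_eq with hk | rfl
    · exact (hf_nonneg k x).trans ((hvhat_rec k hk ω x).symm ▸ le_max_left _ _)
    · exact hvhat_term ω ▸ hf_nonneg k x
  have hdom : ∀ k, k ≤ n → ∀ Z : Ω → ℝ≥0∞, Measurable[F k] Z → ∀ Y : Ω → E k,
      Measurable[F k] Y → ∫⁻ ω, Z ω * ENNReal.ofReal (v k (Y ω)) ∂P
        ≤ ∫⁻ ω, Z ω * ENNReal.ofReal (vhat k ω (Y ω)) ∂P := by
    intro k hk
    induction hk using Nat.decreasingInduction with
    | self => intro Z _ Y _; simp [hv_term, hvhat_term]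
    | of_succ k hk ih =>
      intro Z hZ Y hY
      simp_rw [hv_rec k hk, hvhat_rec k hk]
      exact lintegral_mul_ofReal_max_le (hF_mono k.le_succ) (hF_le (k + 1)) (hf_meas k) (hG_meas k)
        (hG_nonneg k) (hH_meas k) (hH_pos k) (hξ_adapted k) (hGpos k hk.le) (hξ_adapted (k + 1))
        (fun i A hA B hB => measure_inter_preimage_eq_selectionKernel (hF_le k) (hG_meas k)
          (hG_nonneg k) (hH_meas k) (fun x y => (hH_pos k x y).le) (hMarkov k) (hGpos k hk.le)
          (fun i => (hξ_adapted (k + 1) i).mono (hF_le (k + 1)) le_rfl) (hcond k hk) i hA hB)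
        (measurable_of_snell_rec hH_meas hf_meas hG_meas hv_term hv_rec hk)
        (hvhat_nonneg (k + 1) hk) ih hZ hY
  intro k hk x
  have h := hdom k hk 1 measurable_const (fun _ => x) measurable_const
  simp only [Pi.one_apply, one_mul, lintegral_const, measure_univ, mul_one] at h
  rwa [← ofReal_integral_eq_lintegral_ofReal (hvhat_int k x)
    (ae_of_all _ fun ω => hvhat_nonneg k hk ω x),
    ofReal_le_ofReal_iff (integral_nonneg fun ω => hvhat_nonneg k hk ω x)] at h

/-- The particle (stochastic mesh) estimator of the Snell envelope is high biased: for every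
`0 ≤ k ≤ n` and every `x ∈ E_k`, `E(v̂_k(x)) ≥ v_k(x)`. -/
theorem particle_snell_overestimates
    (E : ℕ → Type*) [∀ k, MeasurableSpace (E k)] [∀ k, Nonempty (E k)]
    (n : ℕ) (N : ℕ) (hN : 1 ≤ N)
    -- the Markov transitions `M_{k+1}(x,dy) = H_{k+1}(x,y) λ_{k+1}(dy)`
    (lam : ∀ k, Measure (E (k + 1))) [∀ k, SigmaFinite (lam k)]
    (H : ∀ k, E k → E (k + 1) → ℝ)
    (hH_meas : ∀ k, Measurable (Function.uncurry (H k)))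
    (hH_pos : ∀ k x y, 0 < H k x y)
    (hMarkov : ∀ k x, ∫ y, H k x y ∂(lam k) = 1)
    -- the gain functions and potential functions
    (f G : ∀ k, E k → ℝ)
    (hf_meas : ∀ k, Measurable (f k)) (hG_meas : ∀ k, Measurable (G k))
    (hf_nonneg : ∀ k x, 0 ≤ f k x) (hG_nonneg : ∀ k x, 0 ≤ G k x)
    (hf_bdd : ∀ k, ∃ C, ∀ x, f k x ≤ C)
    -- the particle model: a filtered probability space
    (Ω : Type*) [mΩ : MeasurableSpace Ω] (P : Measure Ω) [IsProbabilityMeasure P]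
    (F : ℕ → MeasurableSpace Ω) (hF_le : ∀ k, F k ≤ mΩ) (hF_mono : Monotone F)
    (ξ : ∀ k, Fin N → Ω → E k)
    (hξ_meas : ∀ k i, Measurable (ξ k i))
    (hξ_adapted : ∀ k i, Measurable[F k] (ξ k i))
    -- the initial particles are i.i.d. with law `η_0`
    (η0 : Measure (E 0)) [IsProbabilityMeasure η0]
    (hinit : ∀ g : Fin N → E 0 → ℝ, (∀ i, Measurable (g i)) → (∀ i, ∃ C, ∀ x, |g i x| ≤ C) →
      ∫ ω, ∏ i : Fin N, g i (ξ 0 i ω) ∂P = ∏ i : Fin N, ∫ x, g i x ∂η0)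
    -- non-degeneracy: `η^N_k(G_k) > 0`
    (hGpos : ∀ k, k ≤ n → ∀ ω, 0 < ∑ i : Fin N, G k (ξ k i ω))
    -- conditionally on `𝓕^N_k`, the particles `ξ^i_{k+1}` are i.i.d. with law `Φ_{k+1}(η^N_k)`
    (hcond : ∀ k, k < n → ∀ g : Fin N → E (k + 1) → ℝ,
      (∀ i, Measurable (g i)) → (∀ i, ∃ C, ∀ y, |g i y| ≤ C) →
      P[(fun ω => ∏ i : Fin N, g i (ξ (k + 1) i ω)) | F k]
        =ᵐ[P] fun ω => ∏ i : Fin N,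
          (∑ j : Fin N, G k (ξ k j ω) * ∫ y, H k (ξ k j ω) y * g i y ∂(lam k))
            / (∑ j : Fin N, G k (ξ k j ω)))
    -- the Snell envelope `v_k = f_k ∨ Q_{k+1}(v_{k+1})`
    (v : ∀ k, E k → ℝ)
    (hv_term : v n = f n)
    (hv_rec : ∀ k, k < n → ∀ x,
      v k x = max (f k x) (G k x * ∫ y, H k x y * v (k + 1) y ∂(lam k)))
    -- its particle approximation `v̂_k = f_k ∨ Q̂_{k+1}(v̂_{k+1})`
    (vhat : ∀ k, Ω → E k → ℝ)
    (hvhat_term : ∀ ω, vhat n ω = f n)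
    (hvhat_rec : ∀ k, k < n → ∀ ω x,
      vhat k ω x = max (f k x)
        ((N : ℝ)⁻¹ * ∑ i : Fin N,
          G k x * H k x (ξ (k + 1) i ω)
            * (∑ j : Fin N, G k (ξ k j ω))
            / (∑ j : Fin N, G k (ξ k j ω) * H k (ξ k j ω) (ξ (k + 1) i ω))
            * vhat (k + 1) ω (ξ (k + 1) i ω)))
    -- integrability of the estimator
    (hvhat_int : ∀ k (x : E k), Integrable (fun ω => vhat k ω x) P) :
    ∀ k, k ≤ n → ∀ x : E k, v k x ≤ ∫ ω, vhat k ω x ∂P :=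
  particle_snell_overestimates_general E n N hN lam H hH_meas hH_pos hMarkov f G hf_meas hG_meas
    hf_nonneg hG_nonneg Ω (mΩ := mΩ) P F hF_le hF_mono ξ hξ_adapted hGpos hcond v hv_term hv_rec
    vhat hvhat_term hvhat_rec hvhat_int
end
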